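/- For every integer m ≥ 2 and every real t, one has V_m⁺(t)² − V_m⁻(t)² = V_{m−1}⁺(t) · V_m⁺(t). -/

import Mathlib

open MeasureTheory Matrix Filter

/-- The k-th Fourier coefficient of the symbol `f(e^{iθ}) = e^{2t cos θ}`. -/
noncomputable def fk (t : ℝ) (k : ℤ) : ℝ :=
  (1 / (2 * Real.pi)) *
    ∫ θ in (0:ℝ)..(2 * Real.pi), Real.exp (2 * t * Real.cos θ) * Real.cos ((k : ℝ) * θ)

/-- The n×n Toeplitz matrix `T_n(t)` with (j,k) entry `f_{j-k}(t)`. -/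
noncomputable def Tmat (n : ℕ) (t : ℝ) : Matrix (Fin n) (Fin n) ℝ :=
  fun j k => fk t ((j : ℤ) - (k : ℤ))

/-- The Toeplitz determinant `D_n(t)`. -/
noncomputable def Dn (n : ℕ) (t : ℝ) : ℝ := (Tmat n t).det

/-- δ⁺ = (1,0,…,0)ᵀ. -/
def deltaPlus (n : ℕ) : Fin n → ℝ := fun i => if (i : ℕ) = 0 then 1 else 0

/-- δ⁻ = (0,…,0,1)ᵀ. -/
def deltaMinus (n : ℕ) : Fin n → ℝ := fun i => if (i : ℕ) = n - 1 then 1 else 0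

/-- f⁺ = (f_1,…,f_n)ᵀ. -/
noncomputable def fplus (n : ℕ) (t : ℝ) : Fin n → ℝ := fun j => fk t ((j : ℤ) + 1)

/-- f⁻ = (f_n,…,f_1)ᵀ. -/
noncomputable def fminus (n : ℕ) (t : ℝ) : Fin n → ℝ := fun j => fk t ((n : ℤ) - (j : ℤ))

/-- U_n(t) = ⟨T_n(t)⁻¹ f⁺, δ⁻⟩. -/
noncomputable def Un (n : ℕ) (t : ℝ) : ℝ :=
  dotProduct ((Tmat n t)⁻¹ *ᵥ fplus n t) (deltaMinus n)

/-- V_n⁺(t) = ⟨T_n(t)⁻¹ δ⁺, δ⁺⟩. -/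
noncomputable def Vplus (n : ℕ) (t : ℝ) : ℝ :=
  dotProduct ((Tmat n t)⁻¹ *ᵥ deltaPlus n) (deltaPlus n)

/-- V_n⁻(t) = ⟨T_n(t)⁻¹ δ⁻, δ⁺⟩. -/
noncomputable def Vminus (n : ℕ) (t : ℝ) : ℝ :=
  dotProduct ((Tmat n t)⁻¹ *ᵥ deltaMinus n) (deltaPlus n)

/-!
`T_m(t)` is symmetric and, being Toeplitz, persymmetric (invariant under reversing rows and
columns); it is positive definite because `⟨T_m x, x⟩ = (1/2π) ∫ e^{2t cos θ} |∑ x_j e^{ijθ}|² dθ`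
and a nonzero polynomial cannot vanish on the unit circle. For `B = T_m⁻¹` and the last index `L`,
Jacobi's formula for the inverse of the leading block `T_{m-1}` gives
`B_LL (T_{m-1}⁻¹)₀₀ = B_LL B₀₀ - B₀L B_L0`; symmetry and persymmetry turn this into
`V⁺_m V⁺_{m-1} = (V⁺_m)² - (V⁻_m)²`.
-/

namespace Matrix

variable {R : Type*} [CommRing R] {n : ℕ}

lemma sum_castSucc_mul_nonsing_inv (A : Matrix (Fin (n + 1)) (Fin (n + 1)) R)
    (hA : IsUnit A.det) (k : Fin n) (c : Fin (n + 1)) :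
    ∑ i : Fin n, A k.castSucc i.castSucc * A⁻¹ i.castSucc c =
      (1 : Matrix (Fin (n + 1)) (Fin (n + 1)) R) k.castSucc c
        - A k.castSucc (Fin.last n) * A⁻¹ (Fin.last n) c := by
  rw [← mul_nonsing_inv A hA, mul_apply, Fin.sum_univ_castSucc, add_sub_cancel_right]

/-- Jacobi: the inverse of the leading principal submatrix `A'` is the Schur complement of the
corner entry `A⁻¹ₗₗ` in `A⁻¹`; stated multiplied by that entry to avoid dividing by it. -/
theorem nonsing_inv_last_last_mul_submatrix_castSucc_inv
    (A : Matrix (Fin (n + 1)) (Fin (n + 1)) R) (hA : IsUnit A.det)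
    (hA' : IsUnit (A.submatrix Fin.castSucc Fin.castSucc).det) (i j : Fin n) :
    A⁻¹ (Fin.last n) (Fin.last n) * (A.submatrix Fin.castSucc Fin.castSucc)⁻¹ i j =
      A⁻¹ (Fin.last n) (Fin.last n) * A⁻¹ i.castSucc j.castSucc
        - A⁻¹ i.castSucc (Fin.last n) * A⁻¹ (Fin.last n) j.castSucc := by
  set A' := A.submatrix Fin.castSucc Fin.castSucc
  set b := A⁻¹ (Fin.last n) (Fin.last n)
  set X : Matrix (Fin n) (Fin n) R := of fun i j =>
    b * A⁻¹ i.castSucc j.castSucc - A⁻¹ i.castSucc (Fin.last n) * A⁻¹ (Fin.last n) j.castSucc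
  have hX : A' * X = b • 1 := by
    ext k j
    have hcol := sum_castSucc_mul_nonsing_inv A hA k j.castSucc
    have hlast := sum_castSucc_mul_nonsing_inv A hA k (Fin.last n)
    simp only [one_apply, Fin.castSucc_inj, (Fin.castSucc_lt_last k).ne, if_false] at hcol hlast
    calc (A' * X) k j
        = b * ∑ i : Fin n, A k.castSucc i.castSucc * A⁻¹ i.castSucc j.castSucc
          - (∑ i : Fin n, A k.castSucc i.castSucc * A⁻¹ i.castSucc (Fin.last n))
            * A⁻¹ (Fin.last n) j.castSucc := by
          rw [mul_apply, Finset.mul_sum, Finset.sum_mul, ← Finset.sum_sub_distrib]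
          exact Finset.sum_congr rfl fun i _ => by simp only [A', X, submatrix_apply, of_apply]; ring
      _ = (b • 1 : Matrix (Fin n) (Fin n) R) k j := by
          rw [hcol, hlast, smul_apply, one_apply, smul_eq_mul]
          split_ifs <;> ring
  have hXeq : X = b • A'⁻¹ := by
    rw [← nonsing_inv_mul_cancel_left A' X hA', hX, Matrix.mul_smul, Matrix.mul_one]
  exact (congrFun (congrFun hXeq i) j).symm

end Matrix

theorem Polynomial.eval_ofFn {R : Type*} [Semiring R] [DecidableEq R] {n : ℕ} (v : Fin n → R)
    (z : R) : (Polynomial.ofFn n v).eval z = ∑ i, v i * z ^ (i : ℕ) := by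
  simp only [Polynomial.ofFn_eq_sum_monomial, Polynomial.eval_finsetSum, Polynomial.eval_monomial]

section Complex

open Complex

theorem norm_sq_sum_mul_exp_mul_I {ι : Type*} (s : Finset ι) (a θ : ι → ℝ) :
    ‖∑ j ∈ s, (a j : ℂ) * exp (θ j * I)‖ ^ 2 =
      ∑ j ∈ s, ∑ k ∈ s, a j * a k * Real.cos (θ j - θ k) := by
  rw [Complex.sq_norm, ← ofReal_re (normSq _), ← mul_conj, map_sum, Finset.sum_mul_sum, re_sum]
  refine Finset.sum_congr rfl fun j _ => (re_sum _ _).trans (Finset.sum_congr rfl fun k _ => ?_)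
  have hterm : (a j : ℂ) * exp (θ j * I) * (starRingEnd ℂ) ((a k : ℂ) * exp (θ k * I)) =
      ((a j * a k : ℝ) : ℂ) * exp ((θ j - θ k : ℝ) * I) := by
    rw [map_mul, conj_ofReal, ← exp_conj, map_mul, conj_ofReal, conj_I]
    push_cast
    rw [sub_mul, sub_eq_add_neg, exp_add]
    ring_nf
  rw [hterm, re_ofReal_mul, exp_ofReal_mul_I_re]

theorem Polynomial.exists_mem_Ico_eval_exp_mul_I_ne_zero {p : Polynomial ℂ} (hp : p ≠ 0)
    {a b : ℝ} (hab : a < b) (hba : b - a ≤ 2 * Real.pi) :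
    ∃ θ ∈ Set.Ico a b, p.eval (exp (θ * I)) ≠ 0 := by
  by_contra! hroot
  have hinj : Set.InjOn (fun θ : ℝ => exp (θ * I)) (Set.Ico a b) := fun x hx y hy h =>
    Circle.exp_injOn_Ico hba hx hy (Subtype.ext (by simpa [Circle.coe_exp] using h))
  exact hp <| Polynomial.eq_zero_of_infinite_isRoot p <|
    ((Set.Ico_infinite hab).image hinj).mono (Set.image_subset_iff.2 hroot)

end Complex

lemma fk_neg (t : ℝ) (k : ℤ) : fk t (-k) = fk t k := by
  simp only [fk, Int.cast_neg, neg_mul, Real.cos_neg]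

lemma Tmat_isSymm (n : ℕ) (t : ℝ) : (Tmat n t).IsSymm := by
  ext j k
  rw [transpose_apply, Tmat, Tmat, ← fk_neg, neg_sub]

lemma Tmat_submatrix_castSucc (n : ℕ) (t : ℝ) :
    (Tmat (n + 1) t).submatrix Fin.castSucc Fin.castSucc = Tmat n t := by
  ext j k
  simp [Tmat]

lemma Tmat_submatrix_rev (n : ℕ) (t : ℝ) : (Tmat n t).submatrix Fin.rev Fin.rev = Tmat n t := by
  ext j k
  rw [submatrix_apply, Tmat, Tmat, ← fk_neg]
  congr 1
  simp only [Fin.val_rev]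
  omega

open Complex in
theorem dotProduct_Tmat_mulVec (n : ℕ) (t : ℝ) (x : Fin n → ℝ) :
    x ⬝ᵥ (Tmat n t *ᵥ x) = (1 / (2 * Real.pi)) * ∫ θ in (0:ℝ)..(2 * Real.pi),
      Real.exp (2 * t * Real.cos θ) * ‖∑ j, (x j : ℂ) * exp ((j * θ : ℝ) * I)‖ ^ 2 := by
  have hint : ∀ j k : Fin n, IntervalIntegrable (fun θ => Real.exp (2 * t * Real.cos θ) *
      (x j * x k * Real.cos (j * θ - k * θ))) volume 0 (2 * Real.pi) :=
    fun j k => (by fun_prop : Continuous _).intervalIntegrable _ _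
  simp_rw [norm_sq_sum_mul_exp_mul_I, Finset.mul_sum]
  rw [intervalIntegral.integral_finsetSum fun j _ =>
    (by fun_prop : Continuous _).intervalIntegrable _ _]
  simp_rw [intervalIntegral.integral_finsetSum fun k _ => hint _ k, Finset.mul_sum]
  simp only [dotProduct, mulVec, Finset.mul_sum]
  refine Finset.sum_congr rfl fun j _ => Finset.sum_congr rfl fun k _ => ?_
  have hcos : ∀ θ : ℝ, Real.cos ((((j : ℤ) - (k : ℤ) : ℤ) : ℝ) * θ) = Real.cos (j * θ - k * θ) :=
    fun θ => by push_cast; ring_nf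
  simp only [Tmat, fk, hcos, mul_left_comm _ (x j * x k), intervalIntegral.integral_const_mul]
  ring

open Complex in
theorem Tmat_posDef (n : ℕ) (t : ℝ) : (Tmat n t).PosDef := by
  refine PosDef.of_dotProduct_mulVec_pos ?_ fun x hx => ?_
  · rw [IsHermitian, conjTranspose_eq_transpose_of_trivial]
    exact Tmat_isSymm n t
  have hp : Polynomial.ofFn n (fun j => (x j : ℂ)) ≠ 0 := by
    rw [← Polynomial.ofFn_zero n]
    exact (Polynomial.injective_ofFn n).ne fun h => hx (funext fun j => by
      simpa using congrFun h j)
  obtain ⟨θ₀, hθ₀, hne⟩ :=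
    Polynomial.exists_mem_Ico_eval_exp_mul_I_ne_zero hp Real.two_pi_pos (by simp)
  have hsum : ∑ j, (x j : ℂ) * exp ((j * θ₀ : ℝ) * I) ≠ 0 := by
    convert hne using 1
    rw [Polynomial.eval_ofFn]
    refine Finset.sum_congr rfl fun j _ => ?_
    rw [← exp_nat_mul]
    push_cast
    ring_nf
  rw [star_trivial, dotProduct_Tmat_mulVec]
  refine mul_pos (by positivity) (intervalIntegral.integral_pos Real.two_pi_pos
    (by fun_prop) (fun _ _ => by positivity) ⟨θ₀, Set.Ico_subset_Icc_self hθ₀, ?_⟩)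
  exact mul_pos (Real.exp_pos _) (pow_pos (norm_pos_iff.2 hsum) 2)

lemma isUnit_det_Tmat (n : ℕ) (t : ℝ) : IsUnit (Tmat n t).det :=
  (Tmat_posDef n t).det_pos.ne'.isUnit

lemma Tmat_inv_rev_rev (n : ℕ) (t : ℝ) (i j : Fin n) :
    (Tmat n t)⁻¹ i.rev j.rev = (Tmat n t)⁻¹ i j := by
  have h := inv_submatrix_equiv (Tmat n t) Fin.revPerm Fin.revPerm
  rw [show (Tmat n t).submatrix Fin.revPerm Fin.revPerm = Tmat n t from Tmat_submatrix_rev n t] at h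
  exact congrFun (congrFun h i) j |>.symm

lemma deltaPlus_succ (n : ℕ) : deltaPlus (n + 1) = Pi.single 0 1 := by
  ext i
  simp only [deltaPlus, Pi.single_apply, Fin.ext_iff, Fin.val_zero]

lemma deltaMinus_succ (n : ℕ) : deltaMinus (n + 1) = Pi.single (Fin.last n) 1 := by
  ext i
  simp only [deltaMinus, Pi.single_apply, Fin.ext_iff, Fin.val_last, Nat.add_sub_cancel]

lemma Vplus_succ (n : ℕ) (t : ℝ) : Vplus (n + 1) t = (Tmat (n + 1) t)⁻¹ 0 0 := by
  simp [Vplus, deltaPlus_succ, mulVec_single]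

lemma Vminus_succ (n : ℕ) (t : ℝ) : Vminus (n + 1) t = (Tmat (n + 1) t)⁻¹ 0 (Fin.last n) := by
  simp [Vminus, deltaPlus_succ, deltaMinus_succ, mulVec_single]

/-- V_m⁺² − V_m⁻² = V_{m−1}⁺ · V_m⁺. -/
theorem Vplus_sq_sub_Vminus_sq (m : ℕ) (hm : 2 ≤ m) (t : ℝ) :
    (Vplus m t) ^ 2 - (Vminus m t) ^ 2 = Vplus (m - 1) t * Vplus m t := by
  obtain ⟨n, rfl⟩ : ∃ n, m = n + 2 := ⟨m - 2, by omega⟩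
  have hjacobi := (Tmat (n + 2) t).nonsing_inv_last_last_mul_submatrix_castSucc_inv
    (isUnit_det_Tmat _ t) (by rw [Tmat_submatrix_castSucc]; exact isUnit_det_Tmat _ t) 0 0
  have hsymm := (Tmat_isSymm (n + 2) t).inv.apply 0 (Fin.last (n + 1))
  have hpersymm := Tmat_inv_rev_rev (n + 2) t 0 0
  rw [Tmat_submatrix_castSucc, Fin.castSucc_zero] at hjacobi
  rw [Fin.rev_zero] at hpersymm
  rw [show n + 2 - 1 = n + 1 from rfl, Vplus_succ, Vplus_succ, Vminus_succ]
  rw [hpersymm, hsymm] at hjacobi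
  linear_combination -hjacobi
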